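/- Assume W satisfies hypotheses (H), and let μ > 0 be such that W(u) ≤ (μ/2)|u − a⁻|² for all u with |u − a⁻| ≤ r and W(u) ≤ (μ/2)|u − a⁺|² for all u with |u − a⁺| ≤ r. Then for every ε ∈ (0,r) and every α < β, every v ∈ H¹([α,β];ℝ^m) with |v(α) − a⁻| = ε and |v(β) − a⁺| = ε satisfies J_{[α,β]}(v) ≥ J_min − (μ+1)ε². -/

import Mathlib

open MeasureTheory Filter
open scoped ENNReal RealInnerProductSpace

noncomputable section

/-- Hypotheses (H) on the potential `W : ℝ^m → ℝ`: regularity `C^{2,α}`, nonnegativity,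
exactly two zeros `a⁻, a⁺`, nondegeneracy (`D²W ≥ c` near the zeros), and coercivity
(`liminf_{|u|→∞} W(u) > 0`). -/
structure HypH (m : ℕ) (W : EuclideanSpace ℝ (Fin m) → ℝ)
    (am ap : EuclideanSpace ℝ (Fin m)) (r c : ℝ) : Prop where
  dim : 2 ≤ m
  smooth : ContDiff ℝ 2 W
  holder : ∃ α ∈ Set.Ioo (0 : ℝ) 1, ∀ K : Set (EuclideanSpace ℝ (Fin m)), IsCompact K →
    ∃ C : ℝ, ∀ u ∈ K, ∀ v ∈ K,
      ‖iteratedFDeriv ℝ 2 W u - iteratedFDeriv ℝ 2 W v‖ ≤ C * ‖u - v‖ ^ α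
  nonneg : ∀ u, 0 ≤ W u
  zero_am : W am = 0
  zero_ap : W ap = 0
  am_ne_ap : am ≠ ap
  zeros : ∀ u, W u = 0 → u = am ∨ u = ap
  r_pos : 0 < r
  c_pos : 0 < c
  convex : ∀ u ν : EuclideanSpace ℝ (Fin m), (‖u - am‖ ≤ r ∨ ‖u - ap‖ ≤ r) → ‖ν‖ = 1 →
    c ≤ iteratedFDeriv ℝ 2 W u ![ν, ν]
  coercive : ∃ ε > (0 : ℝ), ∃ R : ℝ, ∀ u, R ≤ ‖u‖ → ε ≤ W u

variable {m : ℕ}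

/-- `v ∈ W^{1,2}_loc(ℝ;ℝ^m)` (absolutely continuous representative) with weak
derivative `v'`. -/
def IsW12loc (v v' : ℝ → EuclideanSpace ℝ (Fin m)) : Prop :=
  (∀ a b : ℝ, v b - v a = ∫ x in a..b, v' x) ∧
    LocallyIntegrable (fun x => ‖v' x‖ ^ 2) volume

/-- `v` has a distributional derivative `v'` belonging to `L²(ℝ;ℝ^m)`. -/
def HasL2Deriv (v v' : ℝ → EuclideanSpace ℝ (Fin m)) : Prop :=
  (∀ a b : ℝ, v b - v a = ∫ x in a..b, v' x) ∧ MemLp v' 2 volume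

/-- The action `J_ℝ(v) = ∫_ℝ [½|v'|² + W(v)]`. -/
def actJ (W : EuclideanSpace ℝ (Fin m) → ℝ)
    (v v' : ℝ → EuclideanSpace ℝ (Fin m)) : ℝ≥0∞ :=
  ∫⁻ x, ENNReal.ofReal (‖v' x‖ ^ 2 / 2 + W (v x))

/-- The action `J_I(v)` over a set `I ⊂ ℝ`. -/
def actJI (W : EuclideanSpace ℝ (Fin m) → ℝ)
    (v v' : ℝ → EuclideanSpace ℝ (Fin m)) (I : Set ℝ) : ℝ≥0∞ :=
  ∫⁻ x in I, ENNReal.ofReal (‖v' x‖ ^ 2 / 2 + W (v x))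

/-- Membership in the class `A`: connecting `a⁻` (at `−∞`) to `a⁺` (at `+∞`). -/
def memA (am ap : EuclideanSpace ℝ (Fin m)) (v : ℝ → EuclideanSpace ℝ (Fin m)) : Prop :=
  Tendsto v atBot (nhds am) ∧ Tendsto v atTop (nhds ap)

/-- `v` (with derivative `v'`) is a minimal heteroclinic, `Jmin` being the minimal action. -/
def IsMinHet (W : EuclideanSpace ℝ (Fin m) → ℝ) (am ap : EuclideanSpace ℝ (Fin m))
    (Jmin : ℝ) (v v' : ℝ → EuclideanSpace ℝ (Fin m)) : Prop :=
  IsW12loc v v' ∧ memA am ap v ∧ actJ W v v' = ENNReal.ofReal Jmin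

/-- `Jmin` is the (attained) minimum of the action `J_ℝ` over the class `A`. -/
def IsMinAction (W : EuclideanSpace ℝ (Fin m) → ℝ) (am ap : EuclideanSpace ℝ (Fin m))
    (Jmin : ℝ) : Prop :=
  0 ≤ Jmin ∧ (∃ v v', IsMinHet W am ap Jmin v v') ∧
    ∀ v v', IsW12loc v v' → memA am ap v → ENNReal.ofReal Jmin ≤ actJ W v v'

/-- The set `F` of minimal heteroclinics. -/
def hetF (W : EuclideanSpace ℝ (Fin m) → ℝ) (am ap : EuclideanSpace ℝ (Fin m))
    (Jmin : ℝ) : Set (ℝ → EuclideanSpace ℝ (Fin m)) :=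
  {v | ∃ v', IsMinHet W am ap Jmin v v'}

/-- The reference map `𝔢₀`. -/
def ee₀ (am ap : EuclideanSpace ℝ (Fin m)) (x : ℝ) : EuclideanSpace ℝ (Fin m) :=
  if x ≤ -1 then am else if x ≤ 1 then am + ((x + 1) / 2) • (ap - am) else ap

/-- The derivative of the reference map `𝔢₀`. -/
def ee₀' (am ap : EuclideanSpace ℝ (Fin m)) (x : ℝ) : EuclideanSpace ℝ (Fin m) :=
  if -1 < x ∧ x < 1 then ((2 : ℝ)⁻¹) • (ap - am) else 0

-- The effective potential `𝒲(u) = J_ℝ(u) − J_min` when `u` has an `L²` distributional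
-- derivative, `+∞` otherwise.
open Classical in
def effW (W : EuclideanSpace ℝ (Fin m) → ℝ) (Jmin : ℝ)
    (u : ℝ → EuclideanSpace ℝ (Fin m)) : ℝ≥0∞ :=
  if h : ∃ u', HasL2Deriv u u' then actJ W u h.choose - ENNReal.ofReal Jmin else ⊤

/-- The `L²` distance from `u` to a set `S` of maps: `d_ℋ(u,S)`. -/
def distH (u : ℝ → EuclideanSpace ℝ (Fin m))
    (S : Set (ℝ → EuclideanSpace ℝ (Fin m))) : ℝ≥0∞ :=
  ⨅ e ∈ S, eLpNorm (fun x => u x - e x) 2 volume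

/-- The `H¹` norm (as an extended real) of a pair `(f, f')`. -/
def eH1 (f f' : ℝ → EuclideanSpace ℝ (Fin m)) : ℝ≥0∞ :=
  (eLpNorm f 2 volume ^ 2 + eLpNorm f' 2 volume ^ 2) ^ (1 / 2 : ℝ)

/-- The `H¹` distance from `(u, u')` to the set `F` of minimal heteroclinics:
`d_ℋ̃(u,F)`. -/
def distH1F (W : EuclideanSpace ℝ (Fin m) → ℝ) (am ap : EuclideanSpace ℝ (Fin m))
    (Jmin : ℝ) (u u' : ℝ → EuclideanSpace ℝ (Fin m)) : ℝ≥0∞ :=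
  ⨅ (e : ℝ → EuclideanSpace ℝ (Fin m)) (e' : ℝ → EuclideanSpace ℝ (Fin m))
    (_ : IsMinHet W am ap Jmin e e'),
    eH1 (fun x => u x - e x) (fun x => u' x - e' x)

/-!
Glue to the path `v` a linear ramp from `a⁻` to `v α` on `[α - 1, α]` and one from `v β` to `a⁺`
on `[β, β + 1]`, and continue by the constants `a⁻`, `a⁺`. This is a competitor in the class `A`,
so its action is at least `J_min`. Along each ramp the speed is `ε` and, by the quadratic bound on
`W` near the wells, `W ≤ μ ε² / 2`; so each ramp costs at most `(1 + μ) ε² / 2`.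
-/

open Set

theorem clamp_sub_eq_integral_indicator {E : Type*} [NormedAddCommGroup E] [NormedSpace ℝ E]
    {f f' : ℝ → E} {s t : ℝ} (hst : s ≤ t)
    (hf : ∀ a ∈ Icc s t, ∀ b ∈ Icc s t, f b - f a = ∫ x in a..b, f' x)
    (hf' : IntegrableOn f' (Ioc s t)) (a b : ℝ) :
    f (max s (min t b)) - f (max s (min t a)) = ∫ x in a..b, (Ioc s t).indicator f' x := by
  have hint : ∀ a b : ℝ, IntervalIntegrable ((Ioc s t).indicator f') volume a b := fun _ _ =>
    ((integrable_indicator_iff measurableSet_Ioc).2 hf').intervalIntegrable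
  have hmid : ∀ x ∈ Icc s t, ∫ y in s..x, (Ioc s t).indicator f' y = f x - f s := fun x hx => by
    rw [hf s ⟨le_rfl, hst⟩ x hx]
    refine intervalIntegral.integral_congr_ae (.of_forall fun y hy => ?_)
    rw [uIoc_of_le hx.1] at hy
    exact indicator_of_mem (show y ∈ Ioc s t from ⟨hy.1, hy.2.trans hx.2⟩) _
  have hanchor : ∀ x, ∫ y in s..x, (Ioc s t).indicator f' y = f (max s (min t x)) - f s := by
    intro x
    rcases le_total x s with hxs | hsx
    · rw [max_eq_left (min_le_of_right_le hxs), sub_self]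
      refine intervalIntegral.integral_zero_ae (.of_forall fun y hy => ?_)
      rw [uIoc_of_ge hxs] at hy
      exact indicator_of_notMem (fun h => hy.2.not_gt h.1) _
    rcases le_total x t with hxt | htx
    · rw [min_eq_right hxt, max_eq_right hsx, hmid x ⟨hsx, hxt⟩]
    · rw [min_eq_left htx, max_eq_right hst, ← hmid t ⟨hst, le_rfl⟩,
        ← intervalIntegral.integral_add_adjacent_intervals (hint s t) (hint t x), add_eq_left]
      refine intervalIntegral.integral_zero_ae (.of_forall fun y hy => ?_)
      rw [uIoc_of_le htx] at hy
      exact indicator_of_notMem (fun h => hy.1.not_ge h.2) _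
  rw [← intervalIntegral.integral_interval_sub_left (hint s b) (hint s a), hanchor, hanchor]
  abel

section Glue

variable {E : Type*} [NormedAddCommGroup E]

def gluedPathDeriv (a b : E) (s t : ℝ) (γ γ' : ℝ → E) (x : ℝ) : E :=
  (Ioc (s - 1) s).indicator (fun _ => γ s - a) x + (Ioc s t).indicator γ' x
    + (Ioc t (t + 1)).indicator (fun _ => b - γ t) x

theorem memLp_gluedPathDeriv {a b : E} {s t : ℝ} {γ γ' : ℝ → E}
    (hγ' : MemLp γ' 2 (volume.restrict (Ioc s t))) :
    MemLp (gluedPathDeriv a b s t γ γ') 2 volume := by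
  refine ((?_ : MemLp _ 2 volume).add ?_).add ?_ <;>
    rw [memLp_indicator_iff_restrict measurableSet_Ioc]
  exacts [memLp_const _, hγ', memLp_const _]

variable [NormedSpace ℝ E]

/-- The ramp from `a` to `γ s` on `[s - 1, s]`, then `γ` on `[s, t]`, then the ramp from `γ t` to
`b` on `[t, t + 1]`, constant outside; each piece is a clamped path, so they can be added. -/
def gluedPath (a b : E) (s t : ℝ) (γ : ℝ → E) (x : ℝ) : E :=
  a + (max (s - 1) (min s x) - (s - 1)) • (γ s - a) + (γ (max s (min t x)) - γ s)
    + (max t (min (t + 1) x) - t) • (b - γ t)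

variable {a b : E} {s t x : ℝ} {γ γ' : ℝ → E}

theorem gluedPath_of_le (hst : s ≤ t) (hx : x ≤ s - 1) : gluedPath a b s t γ x = a := by
  simp [gluedPath, min_eq_right (hx.trans (by linarith) : x ≤ s), max_eq_left hx,
    max_eq_left (min_le_of_right_le (hx.trans (by linarith) : x ≤ s)),
    min_eq_right (hx.trans (by linarith) : x ≤ t + 1), max_eq_left (hx.trans (by linarith) : x ≤ t)]

theorem gluedPath_of_mem_Icc_left (hst : s ≤ t) (hx : x ∈ Icc (s - 1) s) :
    gluedPath a b s t γ x = a + (x - (s - 1)) • (γ s - a) := by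
  simp [gluedPath, min_eq_right hx.2, max_eq_right hx.1, max_eq_left (min_le_of_right_le hx.2),
    min_eq_right (hx.2.trans (by linarith) : x ≤ t + 1), max_eq_left (hx.2.trans hst)]

theorem gluedPath_of_mem_Icc (hx : x ∈ Icc s t) : gluedPath a b s t γ x = γ x := by
  simp [gluedPath, min_eq_left hx.1, min_eq_right hx.2, max_eq_right hx.1,
    min_eq_right (hx.2.trans (by linarith) : x ≤ t + 1), max_eq_left hx.2]

theorem gluedPath_of_mem_Icc_right (hst : s ≤ t) (hx : x ∈ Icc t (t + 1)) :
    gluedPath a b s t γ x = b + (t + 1 - x) • (γ t - b) := by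
  simp only [gluedPath, min_eq_left (hst.trans hx.1), max_eq_right (by linarith : s - 1 ≤ s),
    min_eq_left hx.1, min_eq_right hx.2, max_eq_right hst, max_eq_right hx.1]
  module

theorem gluedPath_of_ge (hst : s ≤ t) (hx : t + 1 ≤ x) : gluedPath a b s t γ x = b := by
  simp only [gluedPath, min_eq_left (by linarith : s ≤ x), max_eq_right (by linarith : s - 1 ≤ s),
    min_eq_left (by linarith : t ≤ x), min_eq_left hx, max_eq_right hst,
    max_eq_right (by linarith : t ≤ t + 1)]
  module

theorem gluedPath_sub_eq_integral [CompleteSpace E] (hst : s ≤ t)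
    (hγ : ∀ x ∈ Icc s t, ∀ y ∈ Icc s t, γ y - γ x = ∫ z in x..y, γ' z)
    (hγ' : IntegrableOn γ' (Ioc s t)) (x y : ℝ) :
    gluedPath a b s t γ y - gluedPath a b s t γ x = ∫ z in x..y, gluedPathDeriv a b s t γ γ' z := by
  have ramp : ∀ (c d : ℝ) (v : E), ∀ x ∈ Icc c d, ∀ y ∈ Icc c d,
      (y - c) • v - (x - c) • v = ∫ _ in x..y, v := fun c d v x _ y _ => by
    rw [intervalIntegral.integral_const]; module
  have hconst : ∀ (c d : ℝ) (v : E), IntegrableOn (fun _ => v) (Ioc c d) := fun _ _ _ =>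
    integrableOn_const measure_Ioc_lt_top.ne
  have hint : ∀ {c d} {f : ℝ → E}, IntegrableOn f (Ioc c d) →
      IntervalIntegrable ((Ioc c d).indicator f) volume x y := fun hf =>
    ((integrable_indicator_iff measurableSet_Ioc).2 hf).intervalIntegrable
  have h₁ := clamp_sub_eq_integral_indicator (by linarith) (ramp (s - 1) s (γ s - a))
    (hconst _ _ _) x y
  have h₂ := clamp_sub_eq_integral_indicator hst hγ hγ' x y
  have h₃ := clamp_sub_eq_integral_indicator (by linarith) (ramp t (t + 1) (b - γ t))
    (hconst _ _ _) x y
  simp only [gluedPathDeriv]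
  rw [intervalIntegral.integral_add ((hint (hconst _ _ _)).add (hint hγ')) (hint (hconst _ _ _)),
    intervalIntegral.integral_add (hint (hconst _ _ _)) (hint hγ'), ← h₁, ← h₂, ← h₃,
    gluedPath, gluedPath]
  abel

end Glue

section Energy

variable {E : Type*} [NormedAddCommGroup E] [NormedSpace ℝ E] {W : E → ℝ} {r μ : ℝ}

theorem sq_norm_div_two_add_le_of_segment {a p : E} (hμ : 0 ≤ μ)
    (hW : ∀ u, ‖u - a‖ ≤ r → W u ≤ μ / 2 * ‖u - a‖ ^ 2) (hp : ‖p - a‖ ≤ r) {θ : ℝ}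
    (hθ : θ ∈ Icc (0 : ℝ) 1) :
    ‖p - a‖ ^ 2 / 2 + W (a + θ • (p - a)) ≤ (1 + μ) / 2 * ‖p - a‖ ^ 2 := by
  have hdist : ‖a + θ • (p - a) - a‖ ≤ ‖p - a‖ := by
    rw [add_sub_cancel_left, norm_smul, Real.norm_of_nonneg hθ.1]
    exact mul_le_of_le_one_left (norm_nonneg _) hθ.2
  have hsq := pow_le_pow_left₀ (norm_nonneg _) hdist 2
  nlinarith [hW _ (hdist.trans hp)]

variable {a b : E} {s t : ℝ} {γ γ' : ℝ → E}

theorem ofReal_energy_gluedPath_le (hst : s ≤ t) (hμ : 0 ≤ μ) (hWa : W a = 0) (hWb : W b = 0)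
    (hqa : ∀ u, ‖u - a‖ ≤ r → W u ≤ μ / 2 * ‖u - a‖ ^ 2)
    (hqb : ∀ u, ‖u - b‖ ≤ r → W u ≤ μ / 2 * ‖u - b‖ ^ 2)
    (hs : ‖γ s - a‖ ≤ r) (ht : ‖γ t - b‖ ≤ r) (x : ℝ) :
    ENNReal.ofReal (‖gluedPathDeriv a b s t γ γ' x‖ ^ 2 / 2 + W (gluedPath a b s t γ x)) ≤
      (Ioc (s - 1) s).indicator (fun _ => ENNReal.ofReal ((1 + μ) / 2 * ‖γ s - a‖ ^ 2)) x
        + (Ioc s t).indicator (fun z => ENNReal.ofReal (‖γ' z‖ ^ 2 / 2 + W (γ z))) x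
        + (Ioc t (t + 1)).indicator (fun _ => ENNReal.ofReal ((1 + μ) / 2 * ‖γ t - b‖ ^ 2)) x := by
  simp only [gluedPathDeriv]
  rcases le_or_gt x (s - 1) with h₁ | h₁
  · simp only [indicator_of_notMem (notMem_Ioc_of_le h₁),
      indicator_of_notMem (notMem_Ioc_of_le (by linarith : x ≤ s)),
      indicator_of_notMem (notMem_Ioc_of_le (by linarith : x ≤ t)), gluedPath_of_le hst h₁, hWa]
    simp
  rcases le_or_gt x s with h₂ | h₂
  · simp only [indicator_of_mem (show x ∈ Ioc (s - 1) s from ⟨h₁, h₂⟩),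
      indicator_of_notMem (notMem_Ioc_of_le h₂),
      indicator_of_notMem (notMem_Ioc_of_le (h₂.trans hst)), add_zero, gluedPath_of_mem_Icc_left hst ⟨h₁.le, h₂⟩]
    exact ENNReal.ofReal_le_ofReal (sq_norm_div_two_add_le_of_segment hμ hqa hs
      ⟨by linarith, by linarith⟩)
  rcases le_or_gt x t with h₃ | h₃
  · simp only [indicator_of_notMem (fun h : x ∈ Ioc (s - 1) s => h₂.not_ge h.2),
      indicator_of_mem (show x ∈ Ioc s t from ⟨h₂, h₃⟩), indicator_of_notMem (notMem_Ioc_of_le h₃),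
      zero_add, add_zero, gluedPath_of_mem_Icc ⟨h₂.le, h₃⟩, le_refl]
  rcases le_or_gt x (t + 1) with h₄ | h₄
  · simp only [indicator_of_notMem (fun h : x ∈ Ioc (s - 1) s => h₂.not_ge h.2),
      indicator_of_notMem (fun h : x ∈ Ioc s t => h₃.not_ge h.2),
      indicator_of_mem (show x ∈ Ioc t (t + 1) from ⟨h₃, h₄⟩), zero_add,
      gluedPath_of_mem_Icc_right hst ⟨h₃.le, h₄⟩]
    rw [norm_sub_rev b]
    exact ENNReal.ofReal_le_ofReal (sq_norm_div_two_add_le_of_segment hμ hqb ht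
      ⟨by linarith, by linarith⟩)
  · simp only [indicator_of_notMem (fun h : x ∈ Ioc (s - 1) s => h₂.not_ge h.2),
      indicator_of_notMem (fun h : x ∈ Ioc s t => h₃.not_ge h.2),
      indicator_of_notMem (fun h : x ∈ Ioc t (t + 1) => h₄.not_ge h.2),
      gluedPath_of_ge hst h₄.le, hWb]
    simp

end Energy

theorem ofReal_le_actJI_add_of_quadratic_wells {W : EuclideanSpace ℝ (Fin m) → ℝ}
    {am ap : EuclideanSpace ℝ (Fin m)} {r μ Jmin : ℝ}
    (hJ : ∀ v v', IsW12loc v v' → memA am ap v → ENNReal.ofReal Jmin ≤ actJ W v v')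
    (hμ : 0 ≤ μ) (hWam : W am = 0) (hWap : W ap = 0)
    (hqa : ∀ u, ‖u - am‖ ≤ r → W u ≤ μ / 2 * ‖u - am‖ ^ 2)
    (hqb : ∀ u, ‖u - ap‖ ≤ r → W u ≤ μ / 2 * ‖u - ap‖ ^ 2)
    {s t : ℝ} {γ γ' : ℝ → EuclideanSpace ℝ (Fin m)} (hst : s ≤ t)
    (hγ : ∀ x ∈ Icc s t, ∀ y ∈ Icc s t, γ y - γ x = ∫ z in x..y, γ' z)
    (hγ' : MemLp γ' 2 (volume.restrict (Ioc s t))) (hs : ‖γ s - am‖ ≤ r) (ht : ‖γ t - ap‖ ≤ r) :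
    ENNReal.ofReal Jmin ≤ actJI W γ γ' (Ioc s t)
      + ENNReal.ofReal ((1 + μ) / 2 * (‖γ s - am‖ ^ 2 + ‖γ t - ap‖ ^ 2)) := by
  have hW12 : IsW12loc (gluedPath am ap s t γ) (gluedPathDeriv am ap s t γ γ') :=
    ⟨gluedPath_sub_eq_integral hst hγ (hγ'.integrable one_le_two),
      ((memLp_gluedPathDeriv hγ').integrable_norm_pow two_ne_zero).locallyIntegrable⟩
  have hA : memA am ap (gluedPath am ap s t γ) :=
    ⟨tendsto_const_nhds.congr' <| (eventually_le_atBot (s - 1)).mono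
        fun x hx => (gluedPath_of_le hst hx).symm,
      tendsto_const_nhds.congr' <| (eventually_ge_atTop (t + 1)).mono
        fun x hx => (gluedPath_of_ge hst hx).symm⟩
  calc ENNReal.ofReal Jmin ≤ actJ W _ _ := hJ _ _ hW12 hA
    _ ≤ ∫⁻ x, ((Ioc (s - 1) s).indicator (fun _ => ENNReal.ofReal ((1 + μ) / 2 * ‖γ s - am‖ ^ 2)) x
          + (Ioc s t).indicator (fun z => ENNReal.ofReal (‖γ' z‖ ^ 2 / 2 + W (γ z))) x
          + (Ioc t (t + 1)).indicator
              (fun _ => ENNReal.ofReal ((1 + μ) / 2 * ‖γ t - ap‖ ^ 2)) x) :=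
        lintegral_mono (ofReal_energy_gluedPath_le hst hμ hWam hWap hqa hqb hs ht)
    _ = ENNReal.ofReal ((1 + μ) / 2 * ‖γ s - am‖ ^ 2) + actJI W γ γ' (Ioc s t)
          + ENNReal.ofReal ((1 + μ) / 2 * ‖γ t - ap‖ ^ 2) := by
        rw [lintegral_add_right _ (measurable_const.indicator measurableSet_Ioc),
          lintegral_add_left (measurable_const.indicator measurableSet_Ioc),
          lintegral_indicator_const measurableSet_Ioc, lintegral_indicator measurableSet_Ioc,
          lintegral_indicator_const measurableSet_Ioc, Real.volume_Ioc, Real.volume_Ioc]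
        simp [actJI]
    _ = _ := by
        rw [mul_add, ENNReal.ofReal_add (by positivity) (by positivity)]
        ring

theorem memLp_two_of_lintegral_ofReal_sq_norm_lt_top {α F : Type*} [MeasurableSpace α]
    [NormedAddCommGroup F] {μ : Measure α} {f : α → F} (hf : AEStronglyMeasurable f μ)
    (h : ∫⁻ x, ENNReal.ofReal (‖f x‖ ^ 2) ∂μ < ⊤) : MemLp f 2 μ :=
  (memLp_two_iff_integrable_sq_norm hf).2 ⟨hf.norm.pow 2,
    (hasFiniteIntegral_iff_ofReal (.of_forall fun _ => sq_nonneg _)).2 h⟩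

theorem stmt_17_general {m : ℕ} (W : EuclideanSpace ℝ (Fin m) → ℝ)
    (am ap : EuclideanSpace ℝ (Fin m)) (r c : ℝ) (hW : HypH m W am ap r c)
    (Jmin : ℝ) (hJmin : IsMinAction W am ap Jmin)
    (μ : ℝ) (hμ : 0 < μ)
    (hquad : ∀ u : EuclideanSpace ℝ (Fin m),
      (‖u - am‖ ≤ r → W u ≤ μ / 2 * ‖u - am‖ ^ 2) ∧
      (‖u - ap‖ ≤ r → W u ≤ μ / 2 * ‖u - ap‖ ^ 2))
    (ε : ℝ) (hεr : ε < r)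
    (α β : ℝ) (hαβ : α < β)
    (v v' : ℝ → EuclideanSpace ℝ (Fin m))
    -- `v ∈ H¹([α,β];ℝ^m)` with derivative `v'`
    (hv : ∀ a ∈ Set.Icc α β, ∀ b ∈ Set.Icc α β, v b - v a = ∫ x in a..b, v' x)
    (hv' : (∫⁻ x in Set.Icc α β, ENNReal.ofReal (‖v' x‖ ^ 2)) < ⊤)
    (hva : ‖v α - am‖ = ε) (hvb : ‖v β - ap‖ = ε) :
    ENNReal.ofReal (Jmin - (μ + 1) * ε ^ 2) ≤ actJI W v v' (Set.Icc α β) := by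
  have hε : (1 + μ) / 2 * (ε ^ 2 + ε ^ 2) = (μ + 1) * ε ^ 2 := by ring
  have key : ENNReal.ofReal Jmin ≤ actJI W v v' (Icc α β) + ENNReal.ofReal ((μ + 1) * ε ^ 2) := by
    by_cases hii : IntervalIntegrable v' volume α β
    · have hIoc := (intervalIntegrable_iff_integrableOn_Ioc_of_le hαβ.le).1 hii
      have hmem : MemLp v' 2 (volume.restrict (Ioc α β)) :=
        memLp_two_of_lintegral_ofReal_sq_norm_lt_top hIoc.aestronglyMeasurable
          ((lintegral_mono_set Ioc_subset_Icc_self).trans_lt hv')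
      have := ofReal_le_actJI_add_of_quadratic_wells hJmin.2.2 hμ.le hW.zero_am hW.zero_ap
        (fun u => (hquad u).1) (fun u => (hquad u).2) hαβ.le hv hmem (hva ▸ hεr.le) (hvb ▸ hεr.le)
      rw [hva, hvb, hε] at this
      exact this.trans (add_le_add_left (lintegral_mono_set Ioc_subset_Icc_self) _)
    · -- `∫ v'` is the junk value `0`: then `v β = v α`, and gluing the two ramps at `α` suffices
      have hvβ : v β = v α := by
        have h := hv α (left_mem_Icc.2 hαβ.le) β (right_mem_Icc.2 hαβ.le)
        rwa [intervalIntegral.integral_undef hii, sub_eq_zero] at h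
      have := ofReal_le_actJI_add_of_quadratic_wells hJmin.2.2 hμ.le hW.zero_am hW.zero_ap
        (fun u => (hquad u).1) (fun u => (hquad u).2) le_rfl
        (fun x hx y hy => hv x (Icc_subset_Icc_right hαβ.le hx) y (Icc_subset_Icc_right hαβ.le hy))
        (by simp) (hva ▸ hεr.le) (hvβ ▸ hvb ▸ hεr.le)
      rw [hva, ← hvβ, hvb, hε] at this
      exact this.trans (add_le_add_left (lintegral_mono_set (by simp)) _)
  rw [ENNReal.ofReal_sub _ (mul_nonneg (by linarith) (sq_nonneg ε))]
  exact tsub_le_iff_right.2 key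

/-- Lower bound for the action of paths connecting the `ε`-spheres around `a⁻` and `a⁺`:
`J_{[α,β]}(v) ≥ J_min − (μ+1)ε²`. -/
theorem stmt_17 {m : ℕ} (W : EuclideanSpace ℝ (Fin m) → ℝ)
    (am ap : EuclideanSpace ℝ (Fin m)) (r c : ℝ) (hW : HypH m W am ap r c)
    (Jmin : ℝ) (hJmin : IsMinAction W am ap Jmin)
    (μ : ℝ) (hμ : 0 < μ)
    (hquad : ∀ u : EuclideanSpace ℝ (Fin m),
      (‖u - am‖ ≤ r → W u ≤ μ / 2 * ‖u - am‖ ^ 2) ∧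
      (‖u - ap‖ ≤ r → W u ≤ μ / 2 * ‖u - ap‖ ^ 2))
    (ε : ℝ) (hε0 : 0 < ε) (hεr : ε < r)
    (α β : ℝ) (hαβ : α < β)
    (v v' : ℝ → EuclideanSpace ℝ (Fin m))
    -- `v ∈ H¹([α,β];ℝ^m)` with derivative `v'`
    (hv : ∀ a ∈ Set.Icc α β, ∀ b ∈ Set.Icc α β, v b - v a = ∫ x in a..b, v' x)
    (hv' : (∫⁻ x in Set.Icc α β, ENNReal.ofReal (‖v' x‖ ^ 2)) < ⊤)
    (hva : ‖v α - am‖ = ε) (hvb : ‖v β - ap‖ = ε) :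
    ENNReal.ofReal (Jmin - (μ + 1) * ε ^ 2) ≤ actJI W v v' (Set.Icc α β) :=
  stmt_17_general W am ap r c hW Jmin hJmin μ hμ hquad ε hεr α β hαβ v v' hv hv' hva hvb

end
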